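/- arXiv:1303.4312 — 4 statements merged into one kernel-verified Lean document; each statement's English description precedes it below -/
import Mathlib

section
/- For any index i with 0 ≤ i ≤ m+n, there exists a pair (j,k) with 0 ≤ j ≤ m, 0 ≤ k ≤ n, and j+k = i such that (j = 0 or A(j-1) ≤ B(k)) and (k = 0 or B(k-1) < A(j)), where out-of-range accesses A(m) and B(n) are treated as +∞. -/
/-! Induction on `i`, following one step of the stable merge: from a co-rank `(j, k)` of `i`,
take the next element from `A` if `A j ≤ B k` (so ties go to `A`), and from `B` otherwise.
The new comparison is exactly the new co-rank condition, and the old one survives by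
monotonicity. Running out of one input is harmless because `+∞` loses every comparison. -/

/-- Extend a function on `Fin m` to `ℕ` by `+∞` beyond its domain. -/
def extendTop {α : Type*} [LinearOrder α] {m : ℕ} (A : Fin m → α) (j : ℕ) : WithTop α :=
  if h : j < m then ((A ⟨j, h⟩ : α) : WithTop α) else ⊤

/-- The co-rank conditions for a pair `(j,k)` with `j + k = i`. -/
def IsCoRank {α : Type*} [LinearOrder α] {m n : ℕ} (A : Fin m → α) (B : Fin n → α)
    (i j k : ℕ) : Prop :=
  j + k = i ∧ j ≤ m ∧ k ≤ n ∧
  (j = 0 ∨ extendTop A (j - 1) ≤ extendTop B k) ∧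
  (k = 0 ∨ extendTop B (k - 1) < extendTop A j)

section

variable {α : Type*} [LinearOrder α] {m n : ℕ}

lemma extendTop_mono {A : Fin m → α} (hA : Monotone A) : Monotone (extendTop A) := by
  intro a b hab
  unfold extendTop
  split_ifs with ha hb hb
  · exact WithTop.coe_le_coe.mpr (hA hab)
  · exact le_top
  · exact absurd (hab.trans_lt hb) ha
  · exact le_rfl

lemma extendTop_lt_top_iff {A : Fin m → α} {j : ℕ} : extendTop A j < ⊤ ↔ j < m := by
  unfold extendTop
  split_ifs with h <;> simp [h]

lemma isCoRank_zero (A : Fin m → α) (B : Fin n → α) : IsCoRank A B 0 0 0 :=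
  ⟨rfl, Nat.zero_le _, Nat.zero_le _, .inl rfl, .inl rfl⟩

namespace IsCoRank

variable {A : Fin m → α} {B : Fin n → α} {i j k : ℕ}

lemma succ_left (hA : Monotone A) (h : IsCoRank A B i j k) (hj : j < m)
    (hle : extendTop A j ≤ extendTop B k) : IsCoRank A B (i + 1) (j + 1) k := by
  obtain ⟨hsum, -, hk, -, hB⟩ := h
  refine ⟨by omega, hj, hk, .inr hle, hB.imp_right fun hlt => ?_⟩
  exact hlt.trans_le (extendTop_mono hA j.le_succ)

lemma succ_right (hB : Monotone B) (h : IsCoRank A B i j k)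
    (hlt : extendTop B k < extendTop A j) : IsCoRank A B (i + 1) j (k + 1) := by
  obtain ⟨hsum, hj, -, hA, -⟩ := h
  have hk : k < n := extendTop_lt_top_iff.mp (hlt.trans_le le_top)
  refine ⟨by omega, hj, hk, hA.imp_right fun hle => ?_, .inr hlt⟩
  exact hle.trans (extendTop_mono hB k.le_succ)

lemma exists_succ (hA : Monotone A) (hB : Monotone B) (h : IsCoRank A B i j k)
    (hi : i < m + n) : ∃ j' k', IsCoRank A B (i + 1) j' k' := by
  rcases le_or_gt (extendTop A j) (extendTop B k) with hle | hlt
  · have hj : j < m := by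
      by_contra hj
      have hk : k < n := by
        have := h.1
        omega
      exact hj (extendTop_lt_top_iff.mp (hle.trans_lt (extendTop_lt_top_iff.mpr hk)))
    exact ⟨j + 1, k, h.succ_left hA hj hle⟩
  · exact ⟨j, k + 1, h.succ_right hB hlt⟩

end IsCoRank

end

theorem corank_exists {α : Type*} [LinearOrder α] {m n : ℕ}
    (A : Fin m → α) (B : Fin n → α) (hA : Monotone A) (hB : Monotone B)
    (i : ℕ) (hi : i ≤ m + n) :
    ∃ j k, IsCoRank A B i j k := by
  induction i with
  | zero => exact ⟨0, 0, isCoRank_zero A B⟩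
  | succ i ih =>
    obtain ⟨j, k, h⟩ := ih (Nat.le_of_succ_le hi)
    exact h.exists_succ hA hB hi
end

section
/- Define the co-rank j(i) for each 0 ≤ i ≤ m+n as the unique j such that (j, i-j) satisfies the co-rank conditions. Then i ↦ j(i) is monotone nondecreasing, and consequently i ↦ i - j(i) (the co-rank k(i)) is also monotone nondecreasing. -/
section

variable {α : Type*} [LinearOrder α] {m n : ℕ} {A : Fin m → α} {B : Fin n → α}

theorem Monotone.extendTop (hA : Monotone A) : Monotone (extendTop A) := by
  intro a b hab
  unfold _root_.extendTop
  by_cases hb : b < m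
  · have ha : a < m := hab.trans_lt hb
    simp only [dif_pos ha, dif_pos hb, WithTop.coe_le_coe]
    exact hA (show (⟨a, ha⟩ : Fin m) ≤ ⟨b, hb⟩ from hab)
  · simp [dif_neg hb]

namespace IsCoRank

variable {i₁ i₂ j₁ j₂ k₁ k₂ : ℕ}

theorem fst_le (hA : Monotone A) (hB : Monotone B) (h₁ : IsCoRank A B i₁ j₁ k₁)
    (h₂ : IsCoRank A B i₂ j₂ k₂) (hi : i₁ ≤ i₂) : j₁ ≤ j₂ := by
  obtain ⟨hsum₁, -, -, hA₁, -⟩ := h₁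
  obtain ⟨hsum₂, -, -, -, hB₂⟩ := h₂
  by_contra! hj
  have hAB₁ := hA₁.resolve_left (by omega)
  have hBA₂ := hB₂.resolve_left (by omega)
  have := calc
    extendTop B (k₂ - 1) < extendTop A j₂ := hBA₂
    _ ≤ extendTop A (j₁ - 1) := hA.extendTop (by omega)
    _ ≤ extendTop B k₁ := hAB₁
    _ ≤ extendTop B (k₂ - 1) := hB.extendTop (by omega)
  exact this.false

theorem snd_le (hA : Monotone A) (hB : Monotone B) (h₁ : IsCoRank A B i₁ j₁ k₁)
    (h₂ : IsCoRank A B i₂ j₂ k₂) (hi : i₁ ≤ i₂) : k₁ ≤ k₂ := by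
  obtain ⟨hsum₁, -, -, -, hB₁⟩ := h₁
  obtain ⟨hsum₂, -, -, hA₂, -⟩ := h₂
  by_contra! hk
  have hBA₁ := hB₁.resolve_left (by omega)
  have hAB₂ := hA₂.resolve_left (by omega)
  have := calc
    extendTop B (k₁ - 1) < extendTop A j₁ := hBA₁
    _ ≤ extendTop A (j₂ - 1) := hA.extendTop (by omega)
    _ ≤ extendTop B k₂ := hAB₂
    _ ≤ extendTop B (k₁ - 1) := hB.extendTop (by omega)
  exact this.false

end IsCoRank

end

theorem corank_monotone {α : Type*} [LinearOrder α] {m n : ℕ}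
    (A : Fin m → α) (B : Fin n → α) (hA : Monotone A) (hB : Monotone B)
    (J : ℕ → ℕ) (hJ : ∀ i ≤ m + n, IsCoRank A B i (J i) (i - J i)) :
    ∀ i₁ i₂, i₁ ≤ i₂ → i₂ ≤ m + n → J i₁ ≤ J i₂ ∧ i₁ - J i₁ ≤ i₂ - J i₂ := by
  intro i₁ i₂ hi hi₂
  have h₁ := hJ i₁ (hi.trans hi₂)
  have h₂ := hJ i₂ hi₂
  exact ⟨h₁.fst_le hA hB h₂ hi, h₁.snd_le hA hB h₂ hi⟩
end

section
/- Let C be the stable merge of sorted lists A and B (merging with ≤, taking from A on ties). Then for every i ≤ length A + length B, the length-i prefix of C equals the stable merge of the length-j(i) prefix of A and the length-k(i) prefix of B, where (j(i), k(i)) is the unique co-rank pair for i. -/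
/-- List indexing into `WithTop α`: out-of-range accesses are `+∞`. -/
def getTop {α : Type*} [LinearOrder α] (A : List α) (j : ℕ) : WithTop α :=
  ((A[j]?).map (fun a => (a : WithTop α))).getD ⊤

/-- The co-rank conditions for a pair `(j,k)` with `j + k = i`. -/
def IsCoRankL {α : Type*} [LinearOrder α] (A B : List α) (i j k : ℕ) : Prop :=
  j + k = i ∧ j ≤ A.length ∧ k ≤ B.length ∧
  (j = 0 ∨ getTop A (j - 1) ≤ getTop B k) ∧
  (k = 0 ∨ getTop B (k - 1) < getTop A j)

/-!
If `A₁ ++ A₂` and `B₁ ++ B₂` are split so that everything in `A₁` is taken before everything in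
`B₂`, and everything in `B₁` before everything in `A₂`, then merging the two lists merges the
front parts first and the back parts afterwards. The co-rank conditions for `(j, k)`, together
with sortedness, say exactly this for the splits at `j` and `k`; since the merged front part has
length `j + k = i`, it is the length-`i` prefix of the merge.
-/

namespace List

variable {α : Type*} {le : α → α → Bool}

theorem merge_cons_left_of_forall {a : α} {xs ys : List α} (h : ∀ b ∈ ys, le a b) :
    merge (a :: xs) ys le = a :: merge xs ys le := by
  cases ys with
  | nil => simp
  | cons b ys => exact cons_merge_cons_pos _ _ _ (h b mem_cons_self)

theorem merge_cons_right_of_forall {b : α} {xs ys : List α} (h : ∀ a ∈ xs, ¬ le a b) :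
    merge xs (b :: ys) le = b :: merge xs ys le := by
  cases xs with
  | nil => simp
  | cons a xs => exact cons_merge_cons_neg _ _ _ (h a mem_cons_self)

theorem merge_append_left_of_forall {A₁ A₂ B : List α} (h : ∀ a ∈ A₁, ∀ b ∈ B, le a b) :
    merge (A₁ ++ A₂) B le = A₁ ++ merge A₂ B le := by
  induction A₁ with
  | nil => rfl
  | cons a A₁ ih =>
    rw [cons_append, merge_cons_left_of_forall (h a mem_cons_self),
      ih fun a' ha' => h a' (mem_cons_of_mem a ha'), cons_append]

theorem merge_append_right_of_forall {A B₁ B₂ : List α} (h : ∀ a ∈ A, ∀ b ∈ B₁, ¬ le a b) :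
    merge A (B₁ ++ B₂) le = B₁ ++ merge A B₂ le := by
  induction B₁ with
  | nil => rfl
  | cons b B₁ ih =>
    rw [cons_append, merge_cons_right_of_forall fun a ha => h a ha b mem_cons_self,
      ih fun a ha b' hb' => h a ha b' (mem_cons_of_mem b hb'), cons_append]

theorem merge_append_append {A₁ A₂ B₁ B₂ : List α} (h₁ : ∀ a ∈ A₁, ∀ b ∈ B₂, le a b)
    (h₂ : ∀ a ∈ A₂, ∀ b ∈ B₁, ¬ le a b) :
    merge (A₁ ++ A₂) (B₁ ++ B₂) le = merge A₁ B₁ le ++ merge A₂ B₂ le := by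
  induction A₁, B₁ using merge.induct le with
  | case1 B₁ =>
    simpa using merge_append_right_of_forall h₂
  | case2 A₁ =>
    simpa using merge_append_left_of_forall h₁
  | case3 a A₁ b B₁ hab ih =>
    rw [cons_append, cons_append, cons_merge_cons_pos _ _ _ hab, cons_merge_cons_pos _ _ _ hab,
      ← cons_append, ih (fun a' ha' => h₁ a' (mem_cons_of_mem a ha')) h₂, cons_append]
  | case4 a A₁ b B₁ hab ih =>
    rw [cons_append, cons_append, cons_merge_cons_neg _ _ _ hab, cons_merge_cons_neg _ _ _ hab,
      ← cons_append, ih h₁ (fun a' ha' b' hb' => h₂ a' ha' b' (mem_cons_of_mem b hb')), cons_append]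

end List

section getTop

variable {α : Type*} [LinearOrder α] {L : List α}

theorem getTop_eq_coe {n : ℕ} (h : n < L.length) : getTop L n = (L[n] : WithTop α) := by
  simp [getTop, h]

theorem getTop_mono (hL : L.Pairwise (· ≤ ·)) : Monotone (getTop L) := by
  intro m n hmn
  rcases lt_or_ge n L.length with hn | hn
  · rw [getTop_eq_coe hn, getTop_eq_coe (by omega), WithTop.coe_le_coe]
    exact hL.sortedLE.getElem_le_getElem_of_le hmn
  · simp [getTop, hn]

theorem coe_le_getTop_pred_of_mem_take (hL : L.Pairwise (· ≤ ·)) {n : ℕ} {a : α}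
    (ha : a ∈ L.take n) : (a : WithTop α) ≤ getTop L (n - 1) := by
  obtain ⟨m, hm, rfl⟩ := List.mem_take_iff_getElem.mp ha
  rw [← getTop_eq_coe]
  exact getTop_mono hL (by omega)

theorem getTop_le_coe_of_mem_drop (hL : L.Pairwise (· ≤ ·)) {n : ℕ} {b : α}
    (hb : b ∈ L.drop n) : getTop L n ≤ b := by
  obtain ⟨m, hm, rfl⟩ := List.mem_drop_iff_getElem.mp hb
  rw [← getTop_eq_coe]
  exact getTop_mono hL (by omega)

end getTop

namespace IsCoRankL

variable {α : Type*} [LinearOrder α] {A B : List α} {i j k : ℕ}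

theorem le_of_mem_take_of_mem_drop (hA : A.Pairwise (· ≤ ·)) (hB : B.Pairwise (· ≤ ·))
    (h : IsCoRankL A B i j k) {a b : α} (ha : a ∈ A.take j) (hb : b ∈ B.drop k) : a ≤ b := by
  obtain ⟨-, -, -, rfl | hj, -⟩ := h
  · simp at ha
  · exact WithTop.coe_le_coe.mp <|
      (coe_le_getTop_pred_of_mem_take hA ha).trans (hj.trans (getTop_le_coe_of_mem_drop hB hb))

theorem lt_of_mem_take_of_mem_drop (hA : A.Pairwise (· ≤ ·)) (hB : B.Pairwise (· ≤ ·))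
    (h : IsCoRankL A B i j k) {a b : α} (hb : b ∈ B.take k) (ha : a ∈ A.drop j) : b < a := by
  obtain ⟨-, -, -, -, rfl | hk⟩ := h
  · simp at hb
  · exact WithTop.coe_lt_coe.mp <|
      (coe_le_getTop_pred_of_mem_take hB hb).trans_lt
        (hk.trans_le (getTop_le_coe_of_mem_drop hA ha))

end IsCoRankL

theorem merge_take_corank_general {α : Type*} [LinearOrder α]
    (A B : List α) (hA : A.Pairwise (· ≤ ·)) (hB : B.Pairwise (· ≤ ·))
    (i j k : ℕ)
    (h : IsCoRankL A B i j k) :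
    (A.merge B (· ≤ ·)).take i = (A.take j).merge (B.take k) (· ≤ ·) := by
  have hsplit : A.merge B (· ≤ ·) =
      (A.take j).merge (B.take k) (· ≤ ·) ++ (A.drop j).merge (B.drop k) (· ≤ ·) := by
    conv_lhs => rw [← A.take_append_drop j, ← B.take_append_drop k]
    refine List.merge_append_append (fun a ha b hb => ?_) (fun a ha b hb => ?_)
    · exact decide_eq_true (h.le_of_mem_take_of_mem_drop hA hB ha hb)
    · simpa using h.lt_of_mem_take_of_mem_drop hA hB hb ha
  obtain ⟨hjk, hjA, hkB, -⟩ := h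
  rw [hsplit, List.take_left']
  simp [hjA, hkB, hjk]

theorem merge_take_corank {α : Type*} [LinearOrder α]
    (A B : List α) (hA : A.Pairwise (· ≤ ·)) (hB : B.Pairwise (· ≤ ·))
    (i j k : ℕ) (hi : i ≤ A.length + B.length)
    (h : IsCoRankL A B i j k) :
    (A.merge B (· ≤ ·)).take i = (A.take j).merge (B.take k) (· ≤ ·) :=
  merge_take_corank_general A B hA hB i j k h
end

section
/- For any two indices i₁ ≤ i₂ ≤ m+n with co-rank pairs (j₁,k₁) and (j₂,k₂), the sublist of the stable merge C from position i₁ to i₂ equals the stable merge of the sublist of A from j₁ to j₂ with the sublist of B from k₁ to k₂. In particular, disjoint output blocks correspond to disjoint input blocks that may be merged independently. -/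
/-! A co-rank pair `(j, k)` of sorted lists is a cut of the stable merge: the first `j` elements
of `A` are `≤` every element of `B` from position `k` on, and the first `k` elements of `B` are
`<` every element of `A` from position `j` on. The merge never interleaves the two sides of a cut,
so it is the merge of the prefixes followed by the merge of the suffixes. Co-ranks are monotone, so
`(j₂ - j₁, k₂ - k₁)` is a cut of the suffixes at `(j₁, k₁)`; cutting twice isolates the block. -/

namespace List

variable {α : Type*}

theorem append_merge (s : α → α → Bool) {A₁ : List α} (A₂ : List α) {B : List α}
    (h : ∀ a ∈ A₁, ∀ b ∈ B, s a b) :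
    (A₁ ++ A₂).merge B s = A₁ ++ A₂.merge B s := by
  induction A₁ with
  | nil => rfl
  | cons a A₁ ih =>
    cases B with
    | nil => simp
    | cons b B =>
      rw [cons_append, cons_merge_cons_pos s _ _ (h a mem_cons_self b mem_cons_self),
        ih fun a ha => h a (mem_cons_of_mem _ ha), cons_append]

theorem merge_append (s : α → α → Bool) {A B₁ : List α} (B₂ : List α)
    (h : ∀ b ∈ B₁, ∀ a ∈ A, ¬ s a b) :
    A.merge (B₁ ++ B₂) s = B₁ ++ A.merge B₂ s := by
  induction B₁ with
  | nil => rfl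
  | cons b B₁ ih =>
    cases A with
    | nil => simp
    | cons a A =>
      rw [cons_append, cons_merge_cons_neg s _ _ (h b mem_cons_self a mem_cons_self),
        ih fun b hb => h b (mem_cons_of_mem _ hb), cons_append]

theorem append_merge_append (s : α → α → Bool) {A₁ A₂ B₁ B₂ : List α}
    (hAB : ∀ a ∈ A₁, ∀ b ∈ B₂, s a b) (hBA : ∀ b ∈ B₁, ∀ a ∈ A₂, ¬ s a b) :
    (A₁ ++ A₂).merge (B₁ ++ B₂) s = A₁.merge B₁ s ++ A₂.merge B₂ s := by
  induction A₁, B₁ using merge.induct s with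
  | case1 B₁ => simpa using merge_append s B₂ hBA
  | case2 A₁ => simpa using append_merge s A₂ hAB
  | case3 a A₁ b B₁ hab ih =>
    rw [cons_append, cons_append, cons_merge_cons_pos s _ _ hab, cons_merge_cons_pos s _ _ hab,
      ← cons_append (a := b), ih (fun a ha => hAB a (mem_cons_of_mem _ ha)) hBA, cons_append]
  | case4 a A₁ b B₁ hab ih =>
    rw [cons_append, cons_append, cons_merge_cons_neg s _ _ hab, cons_merge_cons_neg s _ _ hab,
      ← cons_append (a := a), ih hAB (fun b hb => hBA b (mem_cons_of_mem _ hb)), cons_append]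

theorem take_sub_drop_subset (l : List α) (i j : ℕ) : (l.drop i).take (j - i) ⊆ l.take j := by
  rw [← drop_take]
  exact drop_subset _ _

theorem drop_sub_drop_subset (l : List α) (i j : ℕ) : (l.drop i).drop (j - i) ⊆ l.drop j := by
  rw [drop_drop]
  exact (drop_sublist_drop_left l (by omega)).subset

def MergeCut (s : α → α → Bool) (A B : List α) (j k : ℕ) : Prop :=
  (∀ a ∈ A.take j, ∀ b ∈ B.drop k, s a b) ∧ (∀ b ∈ B.take k, ∀ a ∈ A.drop j, ¬ s a b)

namespace MergeCut

variable {s : α → α → Bool} {A B : List α} {j k : ℕ}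

theorem merge_eq (h : MergeCut s A B j k) :
    A.merge B s = (A.take j).merge (B.take k) s ++ (A.drop j).merge (B.drop k) s := by
  rw [← append_merge_append s h.1 h.2, take_append_drop, take_append_drop]

theorem drop_merge (h : MergeCut s A B j k) (hj : j ≤ A.length) (hk : k ≤ B.length) :
    (A.merge B s).drop (j + k) = (A.drop j).merge (B.drop k) s := by
  rw [h.merge_eq, drop_left' (by simp [hj, hk])]

theorem take_merge (h : MergeCut s A B j k) (hj : j ≤ A.length) (hk : k ≤ B.length) :
    (A.merge B s).take (j + k) = (A.take j).merge (B.take k) s := by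
  rw [h.merge_eq, take_left' (by simp [hj, hk])]

theorem drop {j' k' : ℕ} (h : MergeCut s A B j' k') (j k : ℕ) :
    MergeCut s (A.drop j) (B.drop k) (j' - j) (k' - k) :=
  ⟨fun a ha b hb => h.1 a (take_sub_drop_subset A j j' ha) b (drop_sub_drop_subset B k k' hb),
    fun b hb a ha => h.2 b (take_sub_drop_subset B k k' hb) a (drop_sub_drop_subset A j j' ha)⟩

/-- Cuts do not cross. -/
theorem le_of_lt {j' k' : ℕ} (h : MergeCut s A B j k) (h' : MergeCut s A B j' k')
    (hj : j ≤ A.length) (hk' : k' ≤ B.length) (hkk' : k < k') : j ≤ j' := by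
  by_contra! hj'j
  have ha : A[j'] ∈ A.take j := mem_take_iff_getElem.2 ⟨j', by omega, rfl⟩
  have ha' : A[j'] ∈ A.drop j' := mem_drop_iff_getElem.2 ⟨0, by omega, rfl⟩
  have hb : B[k] ∈ B.drop k := mem_drop_iff_getElem.2 ⟨0, by omega, rfl⟩
  have hb' : B[k] ∈ B.take k' := mem_take_iff_getElem.2 ⟨k, by omega, rfl⟩
  exact h'.2 _ hb' _ ha' (h.1 _ ha _ hb)

end MergeCut

end List

section CoRank

variable {α : Type*} [LinearOrder α] {A B : List α}

theorem getTop_eq_getElem {j : ℕ} (hj : j < A.length) : getTop A j = A[j] := by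
  simp [getTop, hj]

theorem getTop_monotone (hA : A.Pairwise (· ≤ ·)) : Monotone (getTop A) := by
  intro m n hmn
  by_cases hn : n < A.length
  · rw [getTop_eq_getElem (hmn.trans_lt hn), getTop_eq_getElem hn, WithTop.coe_le_coe]
    exact hA.rel_get_of_le hmn
  · simp [getTop, not_lt.1 hn]

theorem coe_le_getTop_of_mem_take (hA : A.Pairwise (· ≤ ·)) {a : α} {j : ℕ} (ha : a ∈ A.take j) :
    (a : WithTop α) ≤ getTop A (j - 1) := by
  obtain ⟨n, hn, rfl⟩ := List.mem_take_iff_getElem.1 ha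
  rw [← getTop_eq_getElem (by omega)]
  exact getTop_monotone hA (by omega)

theorem getTop_le_coe_of_mem_drop_s9 (hA : A.Pairwise (· ≤ ·)) {a : α} {j : ℕ} (ha : a ∈ A.drop j) :
    getTop A j ≤ (a : WithTop α) := by
  obtain ⟨n, hn, rfl⟩ := List.mem_drop_iff_getElem.1 ha
  rw [← getTop_eq_getElem (by omega)]
  exact getTop_monotone hA (by omega)

theorem IsCoRankL.mergeCut (hA : A.Pairwise (· ≤ ·)) (hB : B.Pairwise (· ≤ ·)) {i j k : ℕ}
    (h : IsCoRankL A B i j k) : List.MergeCut (· ≤ ·) A B j k := by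
  obtain ⟨-, -, -, hAB, hBA⟩ := h
  refine ⟨fun a ha b hb => ?_, fun b hb a ha => ?_⟩
  · obtain rfl | hAB := hAB
    · simp at ha
    suffices (a : WithTop α) ≤ b by simpa using this
    calc (a : WithTop α) ≤ getTop A (j - 1) := coe_le_getTop_of_mem_take hA ha
      _ ≤ getTop B k := hAB
      _ ≤ b := getTop_le_coe_of_mem_drop_s9 hB hb
  · obtain rfl | hBA := hBA
    · simp at hb
    suffices (b : WithTop α) < a by simpa using this
    calc (b : WithTop α) ≤ getTop B (k - 1) := coe_le_getTop_of_mem_take hB hb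
      _ < getTop A j := hBA
      _ ≤ a := getTop_le_coe_of_mem_drop_s9 hA ha

theorem IsCoRankL.mono (hA : A.Pairwise (· ≤ ·)) (hB : B.Pairwise (· ≤ ·))
    {i₁ j₁ k₁ i₂ j₂ k₂ : ℕ} (h₁ : IsCoRankL A B i₁ j₁ k₁) (h₂ : IsCoRankL A B i₂ j₂ k₂)
    (hi : i₁ ≤ i₂) : j₁ ≤ j₂ ∧ k₁ ≤ k₂ := by
  have h₁₂ := (h₁.mergeCut hA hB).le_of_lt (h₂.mergeCut hA hB) h₁.2.1 h₂.2.2.1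
  have h₂₁ := (h₂.mergeCut hA hB).le_of_lt (h₁.mergeCut hA hB) h₂.2.1 h₁.2.2.1
  obtain ⟨rfl, -⟩ := h₁
  obtain ⟨rfl, -⟩ := h₂
  omega

end CoRank

theorem merge_block_corank_general {α : Type*} [LinearOrder α]
    (A B : List α) (hA : A.Pairwise (· ≤ ·)) (hB : B.Pairwise (· ≤ ·))
    (i₁ i₂ j₁ k₁ j₂ k₂ : ℕ) (h12 : i₁ ≤ i₂)
    (h₁ : IsCoRankL A B i₁ j₁ k₁) (h₂ : IsCoRankL A B i₂ j₂ k₂) :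
    ((A.merge B (· ≤ ·)).drop i₁).take (i₂ - i₁) =
      (((A.drop j₁).take (j₂ - j₁)).merge ((B.drop k₁).take (k₂ - k₁)) (· ≤ ·)) := by
  obtain ⟨hj, hk⟩ := h₁.mono hA hB h₂ h12
  have cut₁ := h₁.mergeCut hA hB
  have cut₂ := (h₂.mergeCut hA hB).drop j₁ k₁
  obtain ⟨rfl, hj₁, hk₁, -⟩ := h₁
  obtain ⟨rfl, hj₂, hk₂, -⟩ := h₂
  rw [cut₁.drop_merge hj₁ hk₁, show j₂ + k₂ - (j₁ + k₁) = (j₂ - j₁) + (k₂ - k₁) by omega]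
  exact cut₂.take_merge (by simp; omega) (by simp; omega)

theorem merge_block_corank {α : Type*} [LinearOrder α]
    (A B : List α) (hA : A.Pairwise (· ≤ ·)) (hB : B.Pairwise (· ≤ ·))
    (i₁ i₂ j₁ k₁ j₂ k₂ : ℕ) (h12 : i₁ ≤ i₂) (hi₂ : i₂ ≤ A.length + B.length)
    (h₁ : IsCoRankL A B i₁ j₁ k₁) (h₂ : IsCoRankL A B i₂ j₂ k₂) :
    ((A.merge B (· ≤ ·)).drop i₁).take (i₂ - i₁) =
      (((A.drop j₁).take (j₂ - j₁)).merge ((B.drop k₁).take (k₂ - k₁)) (· ≤ ·)) :=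
  merge_block_corank_general A B hA hB i₁ i₂ j₁ k₁ j₂ k₂ h12 h₁ h₂
end
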